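/- arXiv:0907.5579 — 3 statements merged into one kernel-verified Lean document; each statement's English description precedes it below -/
import Mathlib

section
/- Let K be an abelian group equipped with l commuting automorphisms t_1,...,t_l and let (I_1,I_2) be a pair of valuations for K with constants C, b_1,...,b_l. Let G = K ⋊ ℤ^l and let S be a finite generating set for G. Let z = max{B(m) : (m,k) ∈ S ∪ S^{-1}} and assume z > 0. Then there exists F ∈ ℕ such that for every g = (a,k) ∈ G with |B(a)| ≤ z and k ≠ 0, either I_1(k) ≤ |g|_S · z/4 + F or I_2(k) ≤ |g|_S · z/4 + F. -/
/-- A pair of valuations for an abelian group `K` equipped with `l` commuting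
automorphisms (packaged as a homomorphism `t` from `ℤ^l` to `AddAut K`), with
constants `C` and `b₁, …, b_l`.  The functions `I₁ I₂ : K → ℝ` are only
meaningful on nonzero elements. -/
def IsPairOfValuations {K : Type*} [AddCommGroup K] {l : ℕ}
    (t : Multiplicative (Fin l → ℤ) →* Multiplicative (AddAut K))
    (I₁ I₂ : K → ℝ) (C : ℝ) (b : Fin l → ℝ) : Prop :=
  (∀ k : K, k ≠ 0 → ∀ i : Fin l,
      I₁ (Multiplicative.toAdd (t (Multiplicative.ofAdd (Pi.single i 1))) k) = I₁ k + b i ∧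
      I₂ (Multiplicative.toAdd (t (Multiplicative.ofAdd (Pi.single i 1))) k) = I₂ k - b i) ∧
  (∀ k : K, k ≠ 0 → I₁ (-k) = I₁ k ∧ I₂ (-k) = I₂ k) ∧
  (∀ k₁ k₂ : K, k₁ ≠ 0 → k₂ ≠ 0 → k₁ + k₂ ≠ 0 →
      I₁ (k₁ + k₂) ≤ max (I₁ k₁) (I₁ k₂) + C ∧
      I₂ (k₁ + k₂) ≤ max (I₂ k₁) (I₂ k₂) + C)

/-- `B(m) = b₁ m₁ + ⋯ + b_l m_l`. -/
def Bform {l : ℕ} (b : Fin l → ℝ) (m : Fin l → ℤ) : ℝ := ∑ i, b i * (m i : ℝ)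

/-- `AddAut K` as multiplicative automorphisms of `Multiplicative K`. -/
def addAutToMulAut {K : Type*} [AddCommGroup K] :
    Multiplicative (AddAut K) →* MulAut (Multiplicative K) where
  toFun e := AddEquiv.toMultiplicative (Multiplicative.toAdd e)
  map_one' := rfl
  map_mul' _ _ := rfl

/-- The semidirect product `K ⋊ ℤ^l`, where `ℤ^l` acts on `K` through `t`. -/
abbrev Gsd {K : Type*} [AddCommGroup K] {l : ℕ}
    (t : Multiplicative (Fin l → ℤ) →* Multiplicative (AddAut K)) : Type _ :=
  Multiplicative K ⋊[addAutToMulAut.comp t] Multiplicative (Fin l → ℤ)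

/-- Word length with respect to a generating set `S` (inverses allowed). -/
noncomputable def wordLength {G : Type*} [Group G] (S : Set G) (g : G) : ℕ :=
  sInf {n | ∃ f : Fin n → G, (∀ i, f i ∈ S ∪ S⁻¹) ∧ (List.ofFn f).prod = g}

/-!
Write `g` as a geodesic word `s₀ ⋯ s_{n-1}` in `S ∪ S⁻¹` and let `w j = B(a_j)`, where
`(a_j, k_j) = s₀ ⋯ s_{j-1}`. Then `w` moves by at most `z` per step and ends within `z` of `0`,
and the lamp `k` of `g` is the sum of the translates `t^{a_j} κ_j` of the lamps `κ_j` of the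
letters, with `I₁ ≤ w j + D` and `I₂ ≤ -w j + D` on them. Merging these terms band by band in
the heights `w j` gives `I₁ k ≤ max w + O(log T)` and `I₂ k ≤ -min w + O(log T)`, where `T` is
the largest number of steps the walk spends in a band of fixed width. A walk spending `T` steps
in one band has only about `(n - T) z` left to climb to `max w`, descend to `min w` and return,
so `2 (max w - min w) ≤ (n - T) z + O(1)`. Averaging the two bounds, `O(log T)` is absorbed by
`T z / 4`, and `min (I₁ k) (I₂ k) ≤ n z / 4 + O(1)`.
-/

open Finset

section CoarseUltrametric

variable {K : Type*} [AddCommGroup K]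

def IsCoarselyUltrametric (I : K → ℝ) (C : ℝ) : Prop :=
  ∀ k₁ k₂ : K, k₁ ≠ 0 → k₂ ≠ 0 → k₁ + k₂ ≠ 0 →
    I (k₁ + k₂) ≤ max (I k₁) (I k₂) + C

namespace IsCoarselyUltrametric

variable {I : K → ℝ} {C : ℝ}

theorem add_le (hI : IsCoarselyUltrametric I C) {a b : K} {A : ℝ}
    (ha : a ≠ 0 → I a ≤ A) (hb : b ≠ 0 → I b ≤ A) (hab : a + b ≠ 0) :
    I (a + b) ≤ A + max C 0 := by
  by_cases ha0 : a = 0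
  · subst ha0
    rw [zero_add] at hab ⊢
    linarith [hb hab, le_max_right C 0]
  by_cases hb0 : b = 0
  · subst hb0
    rw [add_zero] at hab ⊢
    linarith [ha hab, le_max_right C 0]
  linarith [hI a b ha0 hb0 hab, max_le (ha ha0) (hb hb0), le_max_left C 0]

/-- Summing `2 ^ d` terms as a balanced binary tree loses only `d` constants. -/
theorem sum_le_of_card_le_two_pow {ι : Type*} (hI : IsCoarselyUltrametric I C) (x : ι → K)
    (A : ℝ) (d : ℕ) {s : Finset ι} (hs : #s ≤ 2 ^ d)
    (hx : ∀ j ∈ s, x j ≠ 0 → I (x j) ≤ A) (hsum : ∑ j ∈ s, x j ≠ 0) :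
    I (∑ j ∈ s, x j) ≤ A + max C 0 * d := by
  classical
  induction d generalizing s with
  | zero =>
    obtain ⟨j, hj, hxj⟩ := exists_ne_zero_of_sum_ne_zero hsum
    have hsj : ∑ i ∈ s, x i = x j := sum_eq_single_of_mem j hj fun i hi hij =>
      absurd (card_le_one.mp (by simpa using hs) i hi j hj) hij
    rw [hsj]
    simpa using hx j hj hxj
  | succ d ih =>
    obtain ⟨s₁, hs₁, hcard₁⟩ := exists_subset_card_eq (min_le_left #s (2 ^ d))
    have hcard₂ : #(s \ s₁) ≤ 2 ^ d := by
      rw [card_sdiff_of_subset hs₁, hcard₁]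
      rw [pow_succ] at hs
      omega
    rw [← sum_sdiff hs₁] at hsum ⊢
    calc I (∑ j ∈ s \ s₁, x j + ∑ j ∈ s₁, x j)
        ≤ (A + max C 0 * d) + max C 0 :=
          hI.add_le (ih hcard₂ fun j hj => hx j (sdiff_subset hj))
            (ih (hcard₁.trans_le (min_le_right _ _)) fun j hj => hx j (hs₁ hj)) hsum
      _ = A + max C 0 * ↑(d + 1) := by push_cast; ring

theorem sum_range_le_of_le_sub_mul (hI : IsCoarselyUltrametric I C) {c : ℝ} (hc : max C 0 ≤ c) :
    ∀ (R : ℕ) (y : ℕ → K) (A : ℝ), (∀ r < R, y r ≠ 0 → I (y r) ≤ A - c * r) →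
      ∑ r ∈ range R, y r ≠ 0 → I (∑ r ∈ range R, y r) ≤ A + c := by
  intro R
  induction R with
  | zero => simp
  | succ R ih =>
    intro y A hy hsum
    rw [sum_range_succ'] at hsum ⊢
    have htail : ∑ r ∈ range R, y (r + 1) ≠ 0 → I (∑ r ∈ range R, y (r + 1)) ≤ A := by
      intro h
      have := ih (fun r => y (r + 1)) (A - c) (fun r hr hyr => by
        have := hy (r + 1) (by omega) hyr
        push_cast at this
        linarith) h
      linarith
    have hhead : y 0 ≠ 0 → I (y 0) ≤ A := fun h => by simpa using hy 0 (by omega) h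
    linarith [hI.add_le htail hhead hsum]

/-- Sort the terms into bands of width `c` below the top height `M`: within a band the
balanced merge costs `max C 0 * clog 2 T`, and the bands, whose heights decrease by `c`,
are then merged one after another at a total cost of one `c`. -/
theorem sum_le_of_card_band_le {ι : Type*} (hI : IsCoarselyUltrametric I C) {c : ℝ}
    (hc : 0 < c) (hCc : C ≤ c) (s : Finset ι) (x : ι → K) (h : ι → ℝ) (M : ℝ) (T : ℕ)
    (hM : ∀ j ∈ s, h j ≤ M) (hx : ∀ j ∈ s, x j ≠ 0 → I (x j) ≤ h j)
    (hT : ∀ u : ℝ, #{j ∈ s | u < h j ∧ h j ≤ u + c} ≤ T)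
    (hsum : ∑ j ∈ s, x j ≠ 0) :
    I (∑ j ∈ s, x j) ≤ M + max C 0 * Nat.clog 2 T + c := by
  classical
  set band : ι → ℕ := fun j => ⌊(M - h j) / c⌋₊
  have hband : ∀ j ∈ s, c * band j ≤ M - h j ∧ M - h j < c * (band j + 1) := fun j hj => by
    have hpos : 0 ≤ (M - h j) / c := div_nonneg (by linarith [hM j hj]) hc.le
    constructor
    · have := Nat.floor_le hpos
      rw [le_div_iff₀ hc] at this
      linarith
    · have := Nat.lt_floor_add_one ((M - h j) / c)
      rw [div_lt_iff₀ hc] at this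
      linarith
  have hmaps : ∀ j ∈ s, band j ∈ range (s.sup band + 1) := fun j hj =>
    mem_range.2 (Nat.lt_succ_of_le (le_sup hj))
  rw [← sum_fiberwise_of_maps_to hmaps] at hsum ⊢
  refine hI.sum_range_le_of_le_sub_mul (max_le hCc hc.le) _ _ _ (fun r _ hr => ?_) hsum
  have hcard : #{j ∈ s | band j = r} ≤ 2 ^ Nat.clog 2 T := by
    refine (card_le_card fun j hj => ?_).trans
      ((hT (M - c * (r + 1))).trans (Nat.le_pow_clog one_lt_two T))
    obtain ⟨hjs, rfl⟩ := mem_filter.1 hj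
    have := hband j hjs
    exact mem_filter.2 ⟨hjs, by linarith, by linarith⟩
  have := hI.sum_le_of_card_le_two_pow x (M - c * r) _ hcard (fun j hj hxj => by
    obtain ⟨hjs, rfl⟩ := mem_filter.1 hj
    linarith [hx j hjs hxj, (hband j hjs).1]) hr
  linarith

end IsCoarselyUltrametric

end CoarseUltrametric

section CoarseLoop

structure IsCoarseLoop (w : ℕ → ℝ) (n : ℕ) (z : ℝ) : Prop where
  abs_step_le : ∀ j < n, |w (j + 1) - w j| ≤ z
  abs_sub_le : |w n - w 0| ≤ z

noncomputable def stepAbove (w : ℕ → ℝ) (v : ℝ) (j : ℕ) : ℝ :=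
  if v < w j then |w (j + 1) - w j| else 0

variable {w : ℕ → ℝ} {n : ℕ} {z : ℝ}

theorem IsCoarseLoop.neg (hw : IsCoarseLoop w n z) : IsCoarseLoop (fun j => -w j) n z where
  abs_step_le j hj := by
    simpa only [neg_sub_neg, abs_sub_comm (w j)] using hw.abs_step_le j hj
  abs_sub_le := by simpa only [neg_sub_neg, abs_sub_comm (w 0)] using hw.abs_sub_le

theorem IsCoarseLoop.add_const (hw : IsCoarseLoop w n z) (D : ℝ) :
    IsCoarseLoop (fun j => w j + D) n z where
  abs_step_le j hj := by simpa using hw.abs_step_le j hj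
  abs_sub_le := by simpa using hw.abs_sub_le

theorem IsCoarseLoop.nonneg (hw : IsCoarseLoop w n z) : 0 ≤ z :=
  (abs_nonneg _).trans hw.abs_sub_le

theorem sub_le_sum_Ico_of_forall_succ_sub_le {f a : ℕ → ℝ} {p q : ℕ} (hpq : p ≤ q)
    (h : ∀ j ∈ Ico p q, f (j + 1) - f j ≤ a j) : f q - f p ≤ ∑ j ∈ Ico p q, a j := by
  have := sum_le_sum h
  rw [sum_Ico_eq_sub _ hpq, sum_range_sub, sum_range_sub] at this
  linarith

theorem max_sub_max_le_sum_stepAbove (v : ℝ) {p q : ℕ} (hpq : p ≤ q) :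
    max (w p) v - max (w q) v ≤ ∑ j ∈ Ico p q, stepAbove w v j := by
  have := sub_le_sum_Ico_of_forall_succ_sub_le (f := fun j => -max (w j) v)
    (a := stepAbove w v) hpq fun j _ => by
      unfold stepAbove
      split_ifs with hv
      · have := abs_max_sub_max_le_abs (w j) (w (j + 1)) v
        rw [abs_sub_comm (w j)] at this
        linarith [le_abs_self (max (w j) v - max (w (j + 1)) v)]
      · linarith [max_eq_right (not_lt.1 hv), le_max_right (w (j + 1)) v]
  linarith

/-- A step starting at or below `v` cannot end above `v + z`, so it never raises
`max w (v + z)`. -/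
theorem IsCoarseLoop.max_add_sub_max_add_le_sum_stepAbove (hw : IsCoarseLoop w n z) (v : ℝ)
    {p q : ℕ} (hpq : p ≤ q) (hqn : q ≤ n) :
    max (w q) (v + z) - max (w p) (v + z) ≤ ∑ j ∈ Ico p q, stepAbove w v j := by
  refine sub_le_sum_Ico_of_forall_succ_sub_le (f := fun j => max (w j) (v + z)) hpq
    fun j hj => ?_
  have hstep := hw.abs_step_le j (by simp at hj; omega)
  unfold stepAbove
  split_ifs with hv
  · exact (le_abs_self _).trans (abs_max_sub_max_le_abs _ _ _)
  · have : w (j + 1) ≤ v + z := by linarith [le_abs_self (w (j + 1) - w j), not_lt.1 hv]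
    linarith [max_eq_right this, le_max_right (w j) (v + z)]

/-- Cut at `τ` and `js`, the loop climbs from `v` to `w τ` and descends from `w τ` to `v`,
one of the two passing through its endpoints, which are `z`-close. -/
theorem IsCoarseLoop.two_mul_sub_le_sum_stepAbove (hw : IsCoarseLoop w n z) {v : ℝ} {τ js : ℕ}
    (hτ : τ ≤ n) (hjs : js ≤ n) (hv : w js ≤ v) :
    2 * (w τ - v) - 2 * z ≤ ∑ j ∈ range n, stepAbove w v j := by
  have hz := hw.nonneg
  have hend := abs_le.1 hw.abs_sub_le
  have hsplit : ∀ {p q : ℕ}, p ≤ q → q ≤ n → ∑ j ∈ Ico 0 p, stepAbove w v j +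
      ∑ j ∈ Ico p q, stepAbove w v j + ∑ j ∈ Ico q n, stepAbove w v j =
        ∑ j ∈ range n, stepAbove w v j := fun hpq hqn => by
    rw [sum_Ico_consecutive _ (Nat.zero_le _) hpq,
      sum_Ico_consecutive _ (hpq.trans' (Nat.zero_le _)) hqn, range_eq_Ico]
  rcases le_total τ js with hτjs | hjsτ
  · rw [← hsplit hτjs hjs]
    have h₁ := hw.max_add_sub_max_add_le_sum_stepAbove v (Nat.zero_le τ) hτ
    have h₂ := max_sub_max_le_sum_stepAbove (w := w) v hτjs
    have h₃ := hw.max_add_sub_max_add_le_sum_stepAbove v hjs le_rfl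
    have : max (w 0) (v + z) ≤ max (w n) (v + z) + z :=
      max_le (by linarith [le_max_left (w n) (v + z)]) (by linarith [le_max_right (w n) (v + z)])
    rw [max_eq_right hv] at h₂
    rw [max_eq_right (by linarith : w js ≤ v + z)] at h₃
    linarith [le_max_left (w τ) (v + z), le_max_left (w τ) v]
  · rw [← hsplit hjsτ hτ]
    have h₁ := max_sub_max_le_sum_stepAbove (w := w) v (Nat.zero_le js)
    have h₂ := hw.max_add_sub_max_add_le_sum_stepAbove v hjsτ hτ
    have h₃ := max_sub_max_le_sum_stepAbove (w := w) v hτ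
    have : max (w n) v ≤ max (w 0) v + z :=
      max_le (by linarith [le_max_left (w 0) v]) (by linarith [le_max_right (w 0) v])
    rw [max_eq_right hv] at h₁
    rw [max_eq_right (by linarith : w js ≤ v + z)] at h₂
    linarith [le_max_left (w τ) (v + z), le_max_left (w τ) v]

/-- Each of the `n` steps is charged at most `z`: a step from the band exactly `z`, a step from
above or below it its length, and the steps above and below have total length at least about
`2 (w τ₁ - w τ₂)`. -/
theorem IsCoarseLoop.card_band_mul_le (hw : IsCoarseLoop w n z) {u c : ℝ} {τ₁ τ₂ js : ℕ}
    (hτ₁ : τ₁ ≤ n) (hτ₂ : τ₂ ≤ n) (hjs : js ≤ n) (hu : u < w js)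
    (huc : w js ≤ u + c) : #{j ∈ range n | u < w j ∧ w j ≤ u + c} * z ≤
      n * z - 2 * (w τ₁ - w τ₂) + 2 * c + 4 * z := by
  have habove := hw.two_mul_sub_le_sum_stepAbove hτ₁ hjs huc
  have hbelow := hw.neg.two_mul_sub_le_sum_stepAbove (v := -u) hτ₂ hjs (neg_le_neg hu.le)
  have hpoint : ∀ j ∈ range n, (if u < w j ∧ w j ≤ u + c then z else 0) +
      stepAbove w (u + c) j + stepAbove (fun j => -w j) (-u) j ≤ z := fun j hj => by
    have hstep := hw.abs_step_le j (mem_range.1 hj)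
    have hz := (abs_nonneg _).trans hstep
    simp only [stepAbove, neg_lt_neg_iff, neg_sub_neg, abs_sub_comm (w j)]
    split_ifs <;> linarith
  have := sum_le_sum hpoint
  rw [sum_add_distrib, sum_add_distrib, ← sum_filter, sum_const, sum_const, card_range,
    nsmul_eq_mul, nsmul_eq_mul] at this
  linarith

theorem IsCoarseLoop.two_mul_sub_le (hw : IsCoarseLoop w n z) {c : ℝ} (hc : 0 < c)
    {τ₁ τ₂ : ℕ} (hτ₁ : τ₁ ≤ n) (hτ₂ : τ₂ ≤ n) :
    2 * (w τ₁ - w τ₂) ≤ n * z + 2 * c + 4 * z := by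
  have := hw.card_band_mul_le (u := w 0 - c) (c := c) hτ₁ hτ₂ (Nat.zero_le n) (by linarith)
    (by linarith)
  nlinarith [hw.nonneg]

theorem IsCoarseLoop.card_band_le (hw : IsCoarseLoop w n z) (hz : 0 < z) (u c : ℝ)
    {τ₁ τ₂ : ℕ} (hτ₁ : τ₁ ≤ n) (hτ₂ : τ₂ ≤ n) :
    #{j ∈ range n | u < w j ∧ w j ≤ u + c} ≤
      ⌈(n * z - 2 * (w τ₁ - w τ₂) + 2 * c + 4 * z) / z⌉₊ := by
  obtain hempty | ⟨js, hjs⟩ :=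
    ({j ∈ range n | u < w j ∧ w j ≤ u + c}).eq_empty_or_nonempty
  · simp [hempty]
  obtain ⟨hjs, hu, huc⟩ := by simpa using hjs
  have := hw.card_band_mul_le hτ₁ hτ₂ hjs.le hu huc
  exact_mod_cast ((le_div_iff₀ hz).2 this).trans (Nat.le_ceil _)

end CoarseLoop

theorem exists_mul_clog_le {a ε : ℝ} (ha : 0 ≤ a) (hε : 0 < ε) :
    ∃ A : ℝ, ∀ T : ℕ, a * Nat.clog 2 T ≤ ε * T + A := by
  set β := a / Real.log 2
  have hβ : 0 ≤ β := div_nonneg ha (Real.log_nonneg one_le_two)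
  set δ := ε / (β + 1)
  have hδ : 0 < δ := by positivity
  refine ⟨a + β * |Real.log δ|, fun T => ?_⟩
  rcases Nat.eq_zero_or_pos T with rfl | hT
  · simp only [Nat.clog_zero_right, CharP.cast_eq_zero, mul_zero, zero_add]
    positivity
  have hTpos : (0 : ℝ) < T := Nat.cast_pos.2 hT
  have hclog : (Nat.clog 2 T : ℝ) ≤ Real.log T / Real.log 2 + 1 := by
    rw [← Real.natCeil_logb_natCast]
    exact (Nat.ceil_lt_add_one (div_nonneg (Real.log_natCast_nonneg T)
      (Real.log_nonneg one_le_two))).le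
  have hlog : Real.log T ≤ δ * T - Real.log δ := by
    have := Real.log_le_sub_one_of_pos (mul_pos hδ hTpos)
    rw [Real.log_mul hδ.ne' hTpos.ne'] at this
    linarith
  have hβδ : β * δ ≤ ε := by
    rw [mul_div_assoc', div_le_iff₀ (by positivity)]
    nlinarith
  calc a * Nat.clog 2 T ≤ a * (Real.log T / Real.log 2 + 1) := by gcongr
    _ = β * Real.log T + a := by ring
    _ ≤ β * (δ * T - Real.log δ) + a := by gcongr
    _ ≤ ε * T + (a + β * |Real.log δ|) := by
      nlinarith [mul_le_mul_of_nonneg_right hβδ hTpos.le,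
        mul_le_mul_of_nonneg_left (neg_le_abs (Real.log δ)) hβ]

section Merging

variable {K : Type*} [AddCommGroup K]

theorem exists_min_le_of_isCoarseLoop {I₁ I₂ : K → ℝ} {C z : ℝ}
    (h₁ : IsCoarselyUltrametric I₁ C) (h₂ : IsCoarselyUltrametric I₂ C) (hz : 0 < z)
    (D : ℝ) :
    ∃ F : ℝ, ∀ (n : ℕ) (w : ℕ → ℝ) (x : ℕ → K), IsCoarseLoop w n z →
      (∀ j < n, x j ≠ 0 → I₁ (x j) ≤ w j + D ∧ I₂ (x j) ≤ -w j + D) →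
      ∑ j ∈ range n, x j ≠ 0 →
      I₁ (∑ j ∈ range n, x j) ≤ n * z / 4 + F ∨
        I₂ (∑ j ∈ range n, x j) ≤ n * z / 4 + F := by
  set c := max C 1
  have hc : 0 < c := lt_max_of_lt_right one_pos
  obtain ⟨A, hA⟩ := exists_mul_clog_le (le_max_right C 0) (by positivity : 0 < z / 4)
  refine ⟨D + 3 * c / 2 + 5 * z / 4 + A, fun n w x hw hx hsum => ?_⟩
  obtain ⟨τ₁, hτ₁, hmax⟩ := exists_max_image (range (n + 1)) w nonempty_range_add_one
  obtain ⟨τ₂, hτ₂, hmin⟩ := exists_min_image (range (n + 1)) w nonempty_range_add_one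
  have hτ₁n : τ₁ ≤ n := Nat.lt_succ_iff.1 (mem_range.1 hτ₁)
  have hτ₂n : τ₂ ≤ n := Nat.lt_succ_iff.1 (mem_range.1 hτ₂)
  set X := n * z - 2 * (w τ₁ - w τ₂) + 2 * c + 4 * z
  set T := ⌈X / z⌉₊
  have hX : 0 ≤ X := by linarith [hw.two_mul_sub_le hc hτ₁n hτ₂n]
  have hT : z / 4 * T ≤ X / 4 + z / 4 := by
    have := (Nat.ceil_lt_add_one (div_nonneg hX hz.le)).le
    calc z / 4 * T ≤ z / 4 * (X / z + 1) := by gcongr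
      _ = X / 4 + z / 4 := by field_simp
  have hmem : range n ⊆ range (n + 1) := range_subset_range.2 n.le_succ
  have hI₁ := h₁.sum_le_of_card_band_le hc (le_max_left C 1) (range n) x (fun j => w j + D)
    (w τ₁ + D) T (fun j hj => by linarith [hmax j (hmem hj)])
    (fun j hj hxj => (hx j (mem_range.1 hj) hxj).1)
    (fun u => by simpa using (hw.add_const D).card_band_le hz u c hτ₁n hτ₂n) hsum
  have hI₂ := h₂.sum_le_of_card_band_le hc (le_max_left C 1) (range n) x (fun j => -w j + D)
    (-w τ₂ + D) T (fun j hj => by linarith [hmin j (hmem hj)])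
    (fun j hj hxj => (hx j (mem_range.1 hj) hxj).2)
    (fun u => by
      convert (hw.neg.add_const D).card_band_le hz u c hτ₂n hτ₁n using 4
      ring) hsum
  have hlog : max C 0 * Nat.clog 2 T ≤ X / 4 + z / 4 + A := (hA T).trans (by linarith)
  by_contra! hcon
  linarith [hcon.1, hcon.2]

end Merging

section Words

variable {G : Type*}

def wordPrefix [Monoid G] (s : ℕ → G) (n : ℕ) : G := ((List.range n).map s).prod

@[simp]
theorem wordPrefix_zero [Monoid G] (s : ℕ → G) : wordPrefix s 0 = 1 := by
  simp [wordPrefix]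

theorem wordPrefix_succ [Monoid G] (s : ℕ → G) (n : ℕ) :
    wordPrefix s (n + 1) = wordPrefix s n * s n :=
  List.prod_range_succ s n

theorem exists_wordPrefix_wordLength_eq [Group G] {S : Set G} (hS : Subgroup.closure S = ⊤)
    (g : G) : ∃ s : ℕ → G, (∀ j < wordLength S g, s j ∈ S ∪ S⁻¹) ∧
      wordPrefix s (wordLength S g) = g := by
  have hg : g ∈ Submonoid.closure (S ∪ S⁻¹) := by
    rw [← Subgroup.closure_toSubmonoid, hS]
    trivial
  obtain ⟨L, hLS, hL⟩ := Submonoid.exists_list_of_mem_closure hg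
  obtain ⟨f, hfS, hf⟩ : ∃ f : Fin (wordLength S g) → G, (∀ i, f i ∈ S ∪ S⁻¹) ∧
      (List.ofFn f).prod = g :=
    Nat.sInf_mem (s := {n | ∃ f : Fin n → G, (∀ i, f i ∈ S ∪ S⁻¹) ∧
      (List.ofFn f).prod = g})
      ⟨L.length, L.get, fun i => hLS _ (L.get_mem i), by rw [List.ofFn_get, hL]⟩
  refine ⟨fun j => if h : j < wordLength S g then f ⟨j, h⟩ else 1,
    fun j hj => by simpa [hj] using hfS ⟨j, hj⟩, ?_⟩
  refine Eq.trans (congrArg List.prod ?_) hf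
  apply List.ext_getElem <;> simp +contextual

theorem SemidirectProduct.left_wordPrefix {N H : Type*} [CommGroup N] [Group H]
    {φ : H →* MulAut N} (s : ℕ → N ⋊[φ] H) (n : ℕ) :
    (wordPrefix s n).left = ∏ j ∈ range n, φ (wordPrefix s j).right (s j).left := by
  induction n with
  | zero => simp
  | succ n ih => rw [wordPrefix_succ, SemidirectProduct.mul_left, ih, prod_range_succ]

end Words

section Lamplighter

open Multiplicative

variable {K : Type*} [AddCommGroup K] {l : ℕ}
  {t : Multiplicative (Fin l → ℤ) →* Multiplicative (AddAut K)}

@[simp]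
theorem Bform_zero (b : Fin l → ℝ) : Bform b 0 = 0 := by
  simp [Bform]

theorem Bform_add (b : Fin l → ℝ) (m₁ m₂ : Fin l → ℤ) :
    Bform b (m₁ + m₂) = Bform b m₁ + Bform b m₂ := by
  simp [Bform, mul_add, sum_add_distrib]

theorem Bform_neg (b : Fin l → ℝ) (m : Fin l → ℤ) : Bform b (-m) = -Bform b m := by
  simp [Bform, sum_neg_distrib]

theorem Bform_neg_left (b : Fin l → ℝ) (m : Fin l → ℤ) : Bform (-b) m = -Bform b m := by
  simp [Bform, sum_neg_distrib]

theorem Bform_single_one (b : Fin l → ℝ) (i : Fin l) : Bform b (Pi.single i 1) = b i := by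
  simp [Bform, Pi.single_apply]

/-- The `v` for which `t^v` shifts `I` by `Bform b v` form a subgroup containing the basis. -/
theorem apply_eq_add_Bform {I : K → ℝ} {b : Fin l → ℝ}
    (h : ∀ k : K, k ≠ 0 → ∀ i : Fin l, I (toAdd (t (ofAdd (Pi.single i 1))) k) = I k + b i)
    (r : Multiplicative (Fin l → ℤ)) {k : K} (hk : k ≠ 0) :
    I (toAdd (t r) k) = I k + Bform b (toAdd r) := by
  have hmul : ∀ (v w : Fin l → ℤ) (k : K),
      toAdd (t (ofAdd (v + w))) k = toAdd (t (ofAdd v)) (toAdd (t (ofAdd w)) k) := by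
    intro v w k
    rw [ofAdd_add, map_mul]
    rfl
  let H : AddSubgroup (Fin l → ℤ) :=
    { carrier := {v | ∀ k : K, k ≠ 0 → I (toAdd (t (ofAdd v)) k) = I k + Bform b v}
      add_mem' := fun {v w} hv hw k hk => by
        rw [hmul, hv _ (by simpa using hk), hw k hk, Bform_add]
        ring
      zero_mem' := fun k _ => by simp
      neg_mem' := fun {v} hv k hk => by
        have := hv (toAdd (t (ofAdd (-v))) k) (by simpa using hk)
        rw [← hmul, add_neg_cancel, ofAdd_zero, map_one] at this
        change I k = _ at this
        rw [Bform_neg]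
        linarith }
  have hsingle : ∀ i, Pi.single i 1 ∈ H := fun i k hk => by rw [h k hk i, Bform_single_one]
  have hr : toAdd r ∈ H := by
    rw [← Finset.univ_sum_single (toAdd r)]
    refine H.sum_mem fun i _ => ?_
    rw [← mul_one (toAdd r i), ← smul_eq_mul, Pi.single_smul]
    exact H.zsmul_mem (hsingle i) _
  exact hr k hk

namespace IsPairOfValuations

variable {I₁ I₂ : K → ℝ} {C : ℝ} {b : Fin l → ℝ}

theorem isCoarselyUltrametric_fst (hval : IsPairOfValuations t I₁ I₂ C b) :
    IsCoarselyUltrametric I₁ C :=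
  fun k₁ k₂ h₁ h₂ h₁₂ => (hval.2.2 k₁ k₂ h₁ h₂ h₁₂).1

theorem isCoarselyUltrametric_snd (hval : IsPairOfValuations t I₁ I₂ C b) :
    IsCoarselyUltrametric I₂ C :=
  fun k₁ k₂ h₁ h₂ h₁₂ => (hval.2.2 k₁ k₂ h₁ h₂ h₁₂).2

theorem le_of_apply_ne_zero (hval : IsPairOfValuations t I₁ I₂ C b)
    {r : Multiplicative (Fin l → ℤ)} {κ : K} {D : ℝ} (hκ : max (I₁ κ) (I₂ κ) ≤ D)
    (hr : toAdd (t r) κ ≠ 0) :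
    I₁ (toAdd (t r) κ) ≤ Bform b (toAdd r) + D ∧
      I₂ (toAdd (t r) κ) ≤ -Bform b (toAdd r) + D := by
  have hκ0 : κ ≠ 0 := fun h => hr (by rw [h, map_zero])
  rw [apply_eq_add_Bform (fun k hk i => (hval.1 k hk i).1) r hκ0,
    apply_eq_add_Bform (b := -b) (fun k hk i => (hval.1 k hk i).2) r hκ0, Bform_neg_left]
  constructor <;> linarith [le_max_left (I₁ κ) (I₂ κ), le_max_right (I₁ κ) (I₂ κ)]

end IsPairOfValuations

theorem abs_Bform_right_le {b : Fin l → ℝ} {S : Set (Gsd t)} {z : ℝ}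
    (hz : IsGreatest ((fun s : Gsd t => Bform b (toAdd s.right)) '' (S ∪ S⁻¹)) z)
    {s : Gsd t} (hs : s ∈ S ∪ S⁻¹) : |Bform b (toAdd s.right)| ≤ z := by
  have hinv : s⁻¹ ∈ S ∪ S⁻¹ := by
    rcases hs with h | h
    · exact Or.inr (by simpa using h)
    · exact Or.inl h
  have h₁ := hz.2 ⟨s, hs, rfl⟩
  have h₂ := hz.2 ⟨s⁻¹, hinv, rfl⟩
  simp only [SemidirectProduct.inv_right, toAdd_inv, Bform_neg] at h₂
  exact abs_le.2 ⟨by linarith, h₁⟩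

theorem toAdd_left_wordPrefix (s : ℕ → Gsd t) (n : ℕ) :
    toAdd (wordPrefix s n).left = ∑ j ∈ range n,
      toAdd (t (wordPrefix s j).right) (toAdd (s j).left) := by
  rw [SemidirectProduct.left_wordPrefix, toAdd_prod]
  rfl

theorem isCoarseLoop_Bform_right_wordPrefix {b : Fin l → ℝ} {z : ℝ}
    (s : ℕ → Gsd t) (n : ℕ) (hs : ∀ j < n, |Bform b (toAdd (s j).right)| ≤ z)
    (hn : |Bform b (toAdd (wordPrefix s n).right)| ≤ z) :
    IsCoarseLoop (fun j => Bform b (toAdd (wordPrefix s j).right)) n z where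
  abs_step_le j hj := by
    simpa [wordPrefix_succ, Bform_add] using hs j hj
  abs_sub_le := by simpa using hn

end Lamplighter

/-- Corollary of Proposition 2, "fourth". -/
theorem stmt3 {K : Type*} [AddCommGroup K] {l : ℕ}
    (t : Multiplicative (Fin l → ℤ) →* Multiplicative (AddAut K))
    (I₁ I₂ : K → ℝ) (C : ℝ) (b : Fin l → ℝ)
    (hval : IsPairOfValuations t I₁ I₂ C b)
    (S : Finset (Gsd t))
    (hgen : Subgroup.closure (S : Set (Gsd t)) = ⊤)
    (z : ℝ)
    (hz : IsGreatest
      ((fun s : Gsd t => Bform b (Multiplicative.toAdd s.right)) ''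
        ((S : Set (Gsd t)) ∪ (S : Set (Gsd t))⁻¹)) z)
    (hzpos : 0 < z) :
    ∃ F : ℕ, ∀ g : Gsd t, |Bform b (Multiplicative.toAdd g.right)| ≤ z → g.left ≠ 1 →
      I₁ (Multiplicative.toAdd g.left) ≤
          (wordLength (S : Set (Gsd t)) g : ℝ) * z / 4 + F ∨
      I₂ (Multiplicative.toAdd g.left) ≤
          (wordLength (S : Set (Gsd t)) g : ℝ) * z / 4 + F := by
  obtain ⟨D, hD⟩ := ((S.finite_toSet.union S.finite_toSet.inv).image fun s : Gsd t =>
    max (I₁ (Multiplicative.toAdd s.left)) (I₂ (Multiplicative.toAdd s.left))).bddAbove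
  obtain ⟨F, hF⟩ := exists_min_le_of_isCoarseLoop hval.isCoarselyUltrametric_fst
    hval.isCoarselyUltrametric_snd hzpos D
  refine ⟨⌈F⌉₊, fun g hgB hg => ?_⟩
  obtain ⟨s, hsS, hsg⟩ := exists_wordPrefix_wordLength_eq hgen g
  have hk := toAdd_left_wordPrefix s (wordLength (S : Set (Gsd t)) g)
  rw [hsg] at hk
  have := hF _ _ _
    (isCoarseLoop_Bform_right_wordPrefix s _ (fun j hj => abs_Bform_right_le hz (hsS j hj))
      (by rw [hsg]; exact hgB))
    (fun j hj => hval.le_of_apply_ne_zero (hD ⟨s j, hsS j hj, rfl⟩))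
    (by rwa [← hk, Ne, toAdd_eq_zero])
  rw [← hk] at this
  have hFceil : F ≤ ⌈F⌉₊ := Nat.le_ceil F
  exact this.imp (fun h => by linarith) (fun h => by linarith)
end

section
/- Let z > 0 be a real number, n ∈ ℕ, and let B_0, B_1, ..., B_n ∈ ℝ satisfy B_0 = B_n = 0, |B_{i+1} − B_i| ≤ z for 0 ≤ i < n, and suppose at most n/2 of the values B_1, ..., B_n are positive. Then for every integer j ≥ 0, the number of indices i ∈ {1,...,n} with B_i > jz is at most max(n/2 − 2j, 0). -/
/-- counting large values in a sequence with bounded increments,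
starting and ending at 0, at most half of whose values are positive. -/
theorem stmt16 (z : ℝ) (hz : 0 < z) (n : ℕ) (B : ℕ → ℝ)
    (h0 : B 0 = 0) (hn : B n = 0)
    (hstep : ∀ i < n, |B (i + 1) - B i| ≤ z)
    (hpos : (((Finset.Icc 1 n).filter (fun i => 0 < B i)).card : ℝ) ≤ (n : ℝ) / 2) :
    ∀ j : ℕ, (((Finset.Icc 1 n).filter (fun i => (j : ℝ) * z < B i)).card : ℝ) ≤
      max ((n : ℝ) / 2 - 2 * (j : ℕ)) 0 := by
  set S : ℕ → Finset ℕ := fun j => (Finset.Icc 1 n).filter (fun i => (j : ℝ) * z < B i)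
    with hS
  have hsub : ∀ j, S (j + 1) ⊆ S j := by
    intro j
    simp only [hS]
    intro i hi
    simp only [Finset.mem_filter] at hi ⊢
    refine ⟨hi.1, lt_trans ?_ hi.2⟩
    push_cast
    nlinarith
  have key : ∀ j : ℕ, (S (j + 1)).Nonempty → (S (j + 1)).card + 2 ≤ (S j).card := by
    intro j hne
    obtain ⟨m, hm⟩ := hne
    simp only [hS, Finset.mem_filter, Finset.mem_Icc] at hm
    obtain ⟨⟨hm1, hmn⟩, hmB⟩ := hm
    have hcast : ((j + 1 : ℕ) : ℝ) * z = (j : ℝ) * z + z := by push_cast; ring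
    rw [hcast] at hmB
    classical
    have hP0 : B 0 ≤ (j : ℝ) * z := by
      rw [h0]; positivity
    set p := Nat.findGreatest (fun p => B p ≤ (j : ℝ) * z) (m - 1) with hp
    have hpP : B p ≤ (j : ℝ) * z := by
      have := Nat.findGreatest_spec (P := fun p => B p ≤ (j : ℝ) * z)
        (Nat.zero_le (m - 1)) hP0
      exact this
    have hple : p ≤ m - 1 := Nat.findGreatest_le _
    have hpm : p < m := by omega
    have hpn : p < n := by omega
    have hpgt : (j : ℝ) * z < B (p + 1) := by
      rcases eq_or_lt_of_le hple with h | h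
      · have : p + 1 = m := by omega
        rw [this]; linarith
      · have := Nat.findGreatest_is_greatest (Nat.lt_succ_of_le le_rfl :
          p < p + 1) (by omega : p + 1 ≤ m - 1)
        push_neg at this
        exact this
    have hpup : B (p + 1) ≤ (j : ℝ) * z + z := by
      have h := (abs_le.mp (hstep p hpn)).2
      linarith
    -- the index after m
    have hexq : ∃ k, B (m + k) ≤ (j : ℝ) * z := by
      refine ⟨n - m, ?_⟩
      rw [Nat.add_sub_cancel' hmn, hn]
      positivity
    set k := Nat.find hexq with hk
    have hkspec : B (m + k) ≤ (j : ℝ) * z := Nat.find_spec hexq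
    have hk1 : 1 ≤ k := by
      rcases Nat.eq_zero_or_pos k with h | h
      · exfalso
        rw [h, Nat.add_zero] at hkspec
        linarith
      · exact h
    have hkle : k ≤ n - m := by
      apply Nat.find_min' hexq
      rw [Nat.add_sub_cancel' hmn, hn]
      positivity
    set b := m + k - 1 with hb
    have hb1 : b + 1 = m + k := by omega
    have hbm : m ≤ b := by omega
    have hbn : b < n := by omega
    have hbgt : (j : ℝ) * z < B b := by
      have hlt : k - 1 < k := by omega
      have := Nat.find_min hexq hlt
      push_neg at this
      have hbeq : b = m + (k - 1) := by omega
      rw [hbeq]; exact this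
    have hbup : B b ≤ (j : ℝ) * z + z := by
      have h := (abs_le.mp (hstep b hbn)).1
      rw [hb1] at h
      linarith
    -- the two extra indices
    have haS : p + 1 ∈ S j := by
      simp only [hS, Finset.mem_filter, Finset.mem_Icc]
      exact ⟨⟨by omega, by omega⟩, hpgt⟩
    have hbS : b ∈ S j := by
      simp only [hS, Finset.mem_filter, Finset.mem_Icc]
      exact ⟨⟨by omega, by omega⟩, hbgt⟩
    have haN : p + 1 ∉ S (j + 1) := by
      simp only [hS, Finset.mem_filter, Finset.mem_Icc, hcast]
      push_neg
      intro _
      linarith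
    have hbN : b ∉ S (j + 1) := by
      simp only [hS, Finset.mem_filter, Finset.mem_Icc, hcast]
      push_neg
      intro _
      linarith
    have ham : p + 1 ≠ m := by
      intro h; rw [h] at hpup; linarith
    have hbm' : b ≠ m := by
      intro h; rw [h] at hbup; linarith
    have hab : p + 1 ≠ b := by omega
    have hsubs : insert (p + 1) (insert b (S (j + 1))) ⊆ S j :=
      Finset.insert_subset haS (Finset.insert_subset hbS (hsub j))
    have hcard : (insert (p + 1) (insert b (S (j + 1)))).card = (S (j + 1)).card + 2 := by
      rw [Finset.card_insert_of_notMem (by simp [hab, haN]),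
        Finset.card_insert_of_notMem hbN]
    calc (S (j + 1)).card + 2 = (insert (p + 1) (insert b (S (j + 1)))).card := hcard.symm
      _ ≤ (S j).card := Finset.card_le_card hsubs
  intro j
  induction j with
  | zero =>
    have h0' : S 0 = (Finset.Icc 1 n).filter (fun i => 0 < B i) := by
      simp [hS]
    show ((S 0).card : ℝ) ≤ _
    rw [h0']
    refine le_trans hpos ?_
    apply le_trans _ (le_max_left _ _)
    push_cast
    linarith
  | succ j ih =>
    show ((S (j + 1)).card : ℝ) ≤ _
    rcases (S (j + 1)).eq_empty_or_nonempty with h | h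
    · rw [h]
      simp
    · have h1 := key j h
      have h2 : ((S (j + 1)).card : ℝ) + 2 ≤ ((S j).card : ℝ) := by exact_mod_cast h1
      have h3 : ((S j).card : ℝ) ≤ max ((n : ℝ) / 2 - 2 * (j : ℕ)) 0 := ih
      have h4 : (0 : ℝ) ≤ ((S (j + 1)).card : ℝ) := by positivity
      rcases le_total ((n : ℝ) / 2 - 2 * (j : ℕ)) 0 with hc | hc
      · rw [max_eq_right hc] at h3
        linarith
      · rw [max_eq_left hc] at h3
        apply le_trans _ (le_max_left _ _)
        push_cast
        linarith
end

section
/- Let K be an abelian group with automorphism t and let (I_1,I_2) be a pair of valuations for K with constants C, b, where b > 0. Let a ∈ K be nonzero. Then there exists N ∈ ℕ such that for all n ≥ N: t^n a + t^{-n} a ≠ 0, and bn + I_1(a) − 2C ≤ I_1(t^n a + t^{-n} a) ≤ bn + I_1(a) + 2C. -/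
/-!
Write `x = tⁿ a` and `y = t⁻ⁿ a`. Since `I₁` shifts by `b` under `t`, we have
`I₁ x = I₁ a + b n` and `I₁ y = I₁ a - b n`, so for large `n` the gap `I₁ x - I₁ y = 2 b n`
is positive (hence `I₁ x ≠ I₁ (-y)` and `x + y ≠ 0`) and exceeds `C`. The quasi-ultrametric
inequality, applied to `x + y` and to `x = (x + y) + (-y)`, then pins `I₁ (x + y)` to within
`C` of `I₁ x`; comparing the two bounds also forces `C ≥ 0`.
-/

open Filter

/-- A pair of valuations for an abelian group `K` with automorphism `t` and
constants `C`, `b`.  The functions `I₁ I₂ : K → ℝ` are only meaningful on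
nonzero elements. -/
def IsPairOfValuations1 {K : Type*} [AddCommGroup K] (t : AddAut K)
    (I₁ I₂ : K → ℝ) (C b : ℝ) : Prop :=
  (∀ k : K, k ≠ 0 → I₁ (t k) = I₁ k + b ∧ I₂ (t k) = I₂ k - b) ∧
  (∀ k : K, k ≠ 0 → I₁ (-k) = I₁ k ∧ I₂ (-k) = I₂ k) ∧
  (∀ k₁ k₂ : K, k₁ ≠ 0 → k₂ ≠ 0 → k₁ + k₂ ≠ 0 →
      I₁ (k₁ + k₂) ≤ max (I₁ k₁) (I₁ k₂) + C ∧
      I₂ (k₁ + k₂) ≤ max (I₂ k₁) (I₂ k₂) + C)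

section QuasiValuation

variable {K : Type*} [AddGroup K] {I : K → ℝ} {b C : ℝ}

theorem apply_zsmul_apply {t : AddAut K} (ht : ∀ k, k ≠ 0 → I (t k) = I k + b)
    (m : ℤ) {k : K} (hk : k ≠ 0) : I ((m • t) k) = I k + m * b := by
  have step (m : ℤ) : I (((m + 1) • t) k) = I ((m • t) k) + b := by
    rw [add_comm, add_zsmul, one_zsmul, AddAut.add_apply]
    exact ht _ ((map_ne_zero_iff _ (m • t).injective).mpr hk)
  induction m using Int.induction_on with
  | zero => simp
  | succ m ih => rw [step, ih]; push_cast; ring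
  | pred m ih =>
    have h := step (-m - 1)
    rw [sub_add_cancel, ih] at h
    push_cast at h ⊢
    linarith

theorem add_ne_zero_of_apply_ne (hneg : ∀ k, k ≠ 0 → I (-k) = I k) {k₁ k₂ : K}
    (hk₁ : k₁ ≠ 0) (hI : I k₁ ≠ I k₂) : k₁ + k₂ ≠ 0 := by
  intro hsum
  rw [eq_neg_of_add_eq_zero_right hsum, hneg k₁ hk₁] at hI
  exact hI rfl

theorem apply_add_le_of_le
    (hadd : ∀ k₁ k₂ : K, k₁ ≠ 0 → k₂ ≠ 0 → k₁ + k₂ ≠ 0 → I (k₁ + k₂) ≤ max (I k₁) (I k₂) + C)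
    {k₁ k₂ : K} (hk₁ : k₁ ≠ 0) (hk₂ : k₂ ≠ 0) (hsum : k₁ + k₂ ≠ 0)
    (hI : I k₂ ≤ I k₁) : I (k₁ + k₂) ≤ I k₁ + C := by
  simpa [max_eq_left hI] using hadd k₁ k₂ hk₁ hk₂ hsum

theorem sub_le_apply_add_of_lt
    (hadd : ∀ k₁ k₂ : K, k₁ ≠ 0 → k₂ ≠ 0 → k₁ + k₂ ≠ 0 → I (k₁ + k₂) ≤ max (I k₁) (I k₂) + C)
    (hneg : ∀ k, k ≠ 0 → I (-k) = I k) {k₁ k₂ : K}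
    (hk₁ : k₁ ≠ 0) (hk₂ : k₂ ≠ 0) (hsum : k₁ + k₂ ≠ 0) (hI : I k₂ + C < I k₁) :
    I k₁ - C ≤ I (k₁ + k₂) := by
  have h := hadd (k₁ + k₂) (-k₂) hsum (neg_ne_zero.mpr hk₂) (by simpa using hk₁)
  rw [add_neg_cancel_right, hneg k₂ hk₂] at h
  rcases max_cases (I (k₁ + k₂)) (I k₂) with ⟨hmax, _⟩ | ⟨hmax, _⟩ <;> linarith

end QuasiValuation

/-- asymptotic value of `I₁ (tⁿa + t⁻ⁿa)`. -/
theorem stmt18 {K : Type*} [AddCommGroup K] (t : AddAut K)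
    (I₁ I₂ : K → ℝ) (C b : ℝ)
    (hval : IsPairOfValuations1 t I₁ I₂ C b) (hb : 0 < b)
    (a : K) (ha : a ≠ 0) :
    ∃ N : ℕ, ∀ n : ℕ, N ≤ n →
      ((n : ℤ) • t) a + ((-(n : ℤ)) • t) a ≠ 0 ∧
      b * n + I₁ a - 2 * C ≤ I₁ (((n : ℤ) • t) a + ((-(n : ℤ)) • t) a) ∧
      I₁ (((n : ℤ) • t) a + ((-(n : ℤ)) • t) a) ≤ b * n + I₁ a + 2 * C := by
  obtain ⟨hshift, hneg, hadd⟩ := hval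
  have gap : Tendsto (fun n : ℕ ↦ 2 * b * n) atTop atTop :=
    tendsto_natCast_atTop_atTop.const_mul_atTop (by positivity)
  obtain ⟨N, hN⟩ := eventually_atTop.mp
    ((gap.eventually_gt_atTop C).and (gap.eventually_gt_atTop 0))
  refine ⟨N, fun n hn ↦ ?_⟩
  obtain ⟨hC, hpos⟩ := hN n hn
  have hx : ((n : ℤ) • t) a ≠ 0 := (map_ne_zero_iff _ (AddEquiv.injective _)).mpr ha
  have hy : ((-(n : ℤ)) • t) a ≠ 0 := (map_ne_zero_iff _ (AddEquiv.injective _)).mpr ha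
  have hIx := apply_zsmul_apply (fun k hk ↦ (hshift k hk).1) (n : ℤ) ha
  have hIy := apply_zsmul_apply (fun k hk ↦ (hshift k hk).1) (-(n : ℤ)) ha
  push_cast at hIx hIy
  have hneg₁ : ∀ k, k ≠ 0 → I₁ (-k) = I₁ k := fun k hk ↦ (hneg k hk).1
  have hadd₁ := fun k₁ k₂ h₁ h₂ h₃ ↦ (hadd k₁ k₂ h₁ h₂ h₃).1
  have hsum := add_ne_zero_of_apply_ne hneg₁ hx (by linarith)
  have lower := sub_le_apply_add_of_lt hadd₁ hneg₁ hx hy hsum (by linarith)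
  have upper := apply_add_le_of_le hadd₁ hx hy hsum (by linarith)
  exact ⟨hsum, by linarith, by linarith⟩
end
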